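/- Consider the annulus X = {(r cos θ, r sin θ) : 1 ≤ r ≤ 2, θ ∈ [0, 2π]} ⊂ ℝ² with the semiflow φ of the vector field r' = 0, θ' = 1 (rigid counterclockwise rotation of each circle), the segment D = {(r, 0) : 1 ≤ r ≤ 2}, and the map I(r, 0) = (−1/2 − r/2, 0). Then: (a) I is Lipschitz with constant 1/2; (b) I(D) ∩ D = ∅; (c) the non-wandering set of the impulsive semiflow ψ of (X, φ, D, I) is the lower half of the unit circle {(cos θ, sin θ) : π ≤ θ ≤ 2π}. -/

import Mathlib

/-!
Write points in polar form `rotFlow θ a = a e^{iθ}`. An orbit of the annulus reaches `D` within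
time `2π` and jumps to the negative real point `-(1 + r)/2`; from a point `-ρ` the orbit sweeps the
lower half-circle of radius `ρ` in time `π` and jumps to `-(1 + ρ)/2`. Hence after time `2π` every
orbit lies in the lower half of the annulus with radius at most `(1 + r)/2`, which confines the
non-wandering set to the lower unit semicircle. Conversely, `e^{iβ}` with `π < β < 2π` rotates to
`1`, jumps to `-1` and rotates back in total time `π`, so these periodic points, dense in the lower
semicircle, make all of it non-wandering.
-/

open Set Complex

/-- The annulus `X = {z : 1 ≤ |z| ≤ 2}` in the plane. -/
def annulus : Set ℂ := {z : ℂ | 1 ≤ ‖z‖ ∧ ‖z‖ ≤ 2}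

/-- The rotation semiflow of the vector field `r' = 0`, `θ' = 1`. -/
noncomputable def rotFlow (t : ℝ) (z : ℂ) : ℂ := Complex.exp (t * Complex.I) * z

/-- The segment `D = {(r, 0) : 1 ≤ r ≤ 2}`. -/
def segD : Set ℂ := {z : ℂ | z.im = 0 ∧ 1 ≤ z.re ∧ z.re ≤ 2}

/-- The impulse map `I(r, 0) = (-1/2 - r/2, 0)`. -/
noncomputable def impMap (z : ℂ) : ℂ := -(1 / 2 : ℂ) - z / 2

/-- `x` is a non-wandering point of the semiflow `ψ` on the set `A`. -/
def NonWanderingOn (ψ : ℝ → ℂ → ℂ) (A : Set ℂ) (x : ℂ) : Prop :=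
  x ∈ A ∧ ∀ ε : ℝ, 0 < ε → ∀ T : ℝ, 0 < T → ∃ t : ℝ, T < t ∧
    ∃ y ∈ A, dist y x < ε ∧ dist (ψ t y) x < ε

open Real

lemma rotFlow_add (s t : ℝ) (z : ℂ) : rotFlow (s + t) z = rotFlow s (rotFlow t z) := by
  simp only [rotFlow, ofReal_add, add_mul, Complex.exp_add, mul_assoc]

lemma rotFlow_pi (z : ℂ) : rotFlow π z = -z := by
  simp [rotFlow, Complex.exp_pi_mul_I]

lemma rotFlow_two_pi (z : ℂ) : rotFlow (2 * π) z = z := by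
  simp [rotFlow, Complex.exp_two_pi_mul_I]

lemma rotFlow_periodic (z : ℂ) : Function.Periodic (fun t => rotFlow t z) (2 * π) := by
  intro t
  simp only [rotFlow_add, rotFlow_two_pi]

lemma norm_rotFlow (t : ℝ) (z : ℂ) : ‖rotFlow t z‖ = ‖z‖ := by
  simp [rotFlow, Complex.norm_exp_ofReal_mul_I]

lemma continuous_rotFlow_left (z : ℂ) : Continuous fun t => rotFlow t z := by
  unfold rotFlow; fun_prop

lemma rotFlow_ofReal_re (t a : ℝ) : (rotFlow t a).re = a * Real.cos t := by
  rw [rotFlow, re_mul_ofReal, Complex.exp_ofReal_mul_I_re, mul_comm]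

lemma rotFlow_ofReal_im (t a : ℝ) : (rotFlow t a).im = a * Real.sin t := by
  rw [rotFlow, im_mul_ofReal, Complex.exp_ofReal_mul_I_im, mul_comm]

lemma exists_rotFlow_norm_eq (z : ℂ) (c : ℝ) :
    ∃ θ ∈ Ico c (c + 2 * π), rotFlow θ ‖z‖ = z := by
  refine ⟨toIcoMod two_pi_pos c (arg z), toIcoMod_mem_Ico _ _ _, ?_⟩
  rw [← self_sub_toIcoDiv_zsmul, (rotFlow_periodic _).sub_zsmul_eq, rotFlow, mul_comm]
  exact Complex.norm_mul_exp_arg_mul_I z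

lemma rotFlow_mem_annulus {z : ℂ} (hz : z ∈ annulus) (t : ℝ) : rotFlow t z ∈ annulus := by
  simpa [annulus, norm_rotFlow] using hz

lemma ofReal_mem_annulus {a : ℝ} (h1 : 1 ≤ a) (h2 : a ≤ 2) : (a : ℂ) ∈ annulus := by
  simp [annulus, abs_of_pos (by linarith : 0 < a), h1, h2]

lemma ofReal_mem_segD {a : ℝ} (h1 : 1 ≤ a) (h2 : a ≤ 2) : (a : ℂ) ∈ segD :=
  ⟨ofReal_im a, h1, h2⟩

lemma rotFlow_ofReal_notMem_segD {a θ : ℝ} (ha : 0 < a) (h0 : 0 < θ) (h2 : θ < 2 * π) :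
    rotFlow θ a ∉ segD := by
  rintro ⟨him, hre, -⟩
  rw [rotFlow_ofReal_im, mul_eq_zero, or_iff_right ha.ne', ← neg_eq_zero, ← Real.sin_sub_pi,
    sin_eq_zero_iff_of_lt_of_lt (by linarith) (by linarith), sub_eq_zero] at him
  rw [rotFlow_ofReal_re, him, Real.cos_pi] at hre
  linarith

lemma impMap_re (z : ℂ) : (impMap z).re = -1 / 2 - z.re / 2 := by
  simp only [impMap, sub_re, neg_re, div_ofNat_re, one_re]; ring

lemma impMap_ofReal (a : ℝ) : impMap a = -(((1 + a) / 2 : ℝ) : ℂ) := by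
  simp only [impMap]; push_cast; ring

lemma dist_impMap (z w : ℂ) : dist (impMap z) (impMap w) = dist z w / 2 := by
  have h : impMap z - impMap w = -((z - w) / 2) := by simp only [impMap]; ring
  rw [dist_eq_norm, dist_eq_norm, h, norm_neg, norm_div, Complex.norm_two]

lemma impMap_image_segD_inter_segD : impMap '' segD ∩ segD = ∅ := by
  refine eq_empty_iff_forall_notMem.2 ?_
  rintro _ ⟨⟨z, ⟨-, hz, -⟩, rfl⟩, -, h, -⟩
  rw [impMap_re] at h
  linarith

lemma mem_closure_rotFlow_one_image_Ioo {x : ℂ} (hx : ‖x‖ = 1) (him : x.im ≤ 0) :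
    x ∈ closure ((fun β => rotFlow β 1) '' Ioo π (2 * π)) := by
  obtain ⟨θ, ⟨hθ₁, hθ₃⟩, hθx⟩ := exists_rotFlow_norm_eq x π
  rw [hx, ofReal_one] at hθx
  subst hθx
  have hθ₂ : θ ≤ 2 * π := by
    by_contra! h
    have := Real.sin_pos_of_pos_of_lt_pi (x := θ - 2 * π) (by linarith) (by linarith)
    rw [Real.sin_sub_two_pi, ← one_mul (Real.sin θ), ← rotFlow_ofReal_im, ofReal_one] at this
    linarith
  refine image_closure_subset_closure_image (continuous_rotFlow_left 1) ⟨θ, ?_, rfl⟩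
  rw [closure_Ioo (by linarith [pi_pos])]
  exact ⟨hθ₁, hθ₂⟩

lemma semiflow_nat_mul_eq_of_eq {α : Type*} {ψ : ℝ → α → α} {A : Set α}
    (hid : ∀ x ∈ A, ψ 0 x = x)
    (hsemi : ∀ s t : ℝ, 0 ≤ s → 0 ≤ t → ∀ x ∈ A, ψ (t + s) x = ψ t (ψ s x))
    {x : α} (hx : x ∈ A) {p : ℝ} (hp : 0 ≤ p) (hper : ψ p x = x) (n : ℕ) :
    ψ (n * p) x = x := by
  induction n with
  | zero => simpa using hid x hx
  | succ n ih =>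
    rw [Nat.cast_succ, add_one_mul, hsemi p _ hp (by positivity) x hx, hper, ih]

lemma NonWanderingOn.of_mem_closure_periodic {ψ : ℝ → ℂ → ℂ} {A : Set ℂ} {x : ℂ} (hx : x ∈ A)
    (hcl : x ∈ closure {y ∈ A | ∃ p > 0, ∀ n : ℕ, ψ (n * p) y = y}) :
    NonWanderingOn ψ A x := by
  refine ⟨hx, fun ε hε T _ => ?_⟩
  obtain ⟨y, ⟨hyA, p, hp, hper⟩, hxy⟩ := Metric.mem_closure_iff.1 hcl ε hε
  obtain ⟨n, hn⟩ := exists_lt_nsmul hp T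
  rw [nsmul_eq_mul] at hn
  rw [dist_comm] at hxy
  exact ⟨n * p, hn, y, hyA, hxy, by rwa [hper]⟩

section ImpulsiveRotation

variable {ψ : ℝ → ℂ → ℂ}
  (hid : ∀ x ∈ annulus, ψ 0 x = x)
  (hsemi : ∀ s t : ℝ, 0 ≤ s → 0 ≤ t → ∀ x ∈ annulus, ψ (t + s) x = ψ t (ψ s x))
  (hfollow : ∀ x ∈ annulus, ∀ t : ℝ, 0 ≤ t →
    (∀ s : ℝ, 0 < s → s ≤ t → rotFlow s x ∉ segD) → ψ t x = rotFlow t x)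
  (hjump : ∀ x ∈ annulus, ∀ t : ℝ, 0 < t → rotFlow t x ∈ segD →
    (∀ s : ℝ, 0 < s → s < t → rotFlow s x ∉ segD) → ψ t x = impMap (rotFlow t x))

include hfollow in
lemma psi_rotFlow_ofReal_of_lt {a θ u : ℝ} (ha₁ : 1 ≤ a) (ha₂ : a ≤ 2) (hθ : 0 ≤ θ) (hu : 0 ≤ u)
    (hθu : u + θ < 2 * π) : ψ u (rotFlow θ a) = rotFlow (u + θ) a := by
  rw [rotFlow_add]
  refine hfollow _ (rotFlow_mem_annulus (ofReal_mem_annulus ha₁ ha₂) θ) u hu fun s hs hsu => ?_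
  rw [← rotFlow_add]
  exact rotFlow_ofReal_notMem_segD (by linarith) (by linarith) (by linarith)

include hjump in
lemma psi_rotFlow_ofReal_hit {a θ : ℝ} (ha₁ : 1 ≤ a) (ha₂ : a ≤ 2) (hθ₀ : 0 ≤ θ) (hθ : θ < 2 * π) :
    ψ (2 * π - θ) (rotFlow θ a) = -(((1 + a) / 2 : ℝ) : ℂ) := by
  have hhit : rotFlow (2 * π - θ) (rotFlow θ a) = a := by
    rw [← rotFlow_add, sub_add_cancel, rotFlow_two_pi]
  rw [hjump _ (rotFlow_mem_annulus (ofReal_mem_annulus ha₁ ha₂) θ) _ (by linarith)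
    (by rw [hhit]; exact ofReal_mem_segD ha₁ ha₂) fun s hs hsθ => ?_, hhit, impMap_ofReal]
  rw [← rotFlow_add]
  exact rotFlow_ofReal_notMem_segD (by linarith) (by linarith) (by linarith)

include hjump in
lemma psi_pi_neg_ofReal {ρ : ℝ} (hρ₁ : 1 ≤ ρ) (hρ₂ : ρ ≤ 2) :
    ψ π (-(ρ : ℂ)) = -(((1 + ρ) / 2 : ℝ) : ℂ) := by
  rw [← rotFlow_pi, ← psi_rotFlow_ofReal_hit hjump hρ₁ hρ₂ pi_pos.le (by linarith [pi_pos])]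
  ring_nf

include hsemi hfollow hjump in
lemma exists_psi_neg_ofReal_eq {ρ t : ℝ} (hρ₁ : 1 ≤ ρ) (hρ₂ : ρ ≤ 2) (ht : 0 ≤ t) :
    ∃ ρ' ∈ Icc 1 ρ, ∃ u ∈ Ico 0 π, ψ t (-(ρ : ℂ)) = rotFlow u (-(ρ' : ℂ)) := by
  obtain ⟨n, hn⟩ := exists_lt_nsmul pi_pos t
  induction n generalizing ρ t with
  | zero => rw [zero_smul] at hn; linarith
  | succ n ih =>
    rcases lt_or_ge t π with htπ | htπ
    · refine ⟨ρ, ⟨hρ₁, le_rfl⟩, t, ⟨ht, htπ⟩, ?_⟩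
      rw [← rotFlow_pi, psi_rotFlow_ofReal_of_lt hfollow hρ₁ hρ₂ pi_pos.le ht
        (by linarith [pi_pos]), rotFlow_add]
    · rw [← sub_add_cancel t π, hsemi π (t - π) pi_pos.le (by linarith) _
        (by simpa [annulus] using ofReal_mem_annulus hρ₁ hρ₂), psi_pi_neg_ofReal hjump hρ₁ hρ₂]
      obtain ⟨ρ', hρ', hu⟩ := ih (ρ := (1 + ρ) / 2) (t := t - π) (by linarith) (by linarith)
        (by linarith) (by rw [succ_nsmul] at hn; linarith)
      exact ⟨ρ', ⟨hρ'.1, by linarith [hρ'.2]⟩, hu⟩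

include hsemi hfollow hjump in
lemma norm_psi_le_and_im_psi_nonpos {z : ℂ} (hz : z ∈ annulus) {t : ℝ} (ht : 2 * π ≤ t) :
    ‖ψ t z‖ ≤ (1 + ‖z‖) / 2 ∧ (ψ t z).im ≤ 0 := by
  obtain ⟨θ, ⟨hθ₀, hθ⟩, hθz⟩ := exists_rotFlow_norm_eq z 0
  rw [zero_add] at hθ
  obtain ⟨ρ', ⟨hρ'₁, hρ'₂⟩, u, ⟨hu₀, huπ⟩, hψ⟩ := exists_psi_neg_ofReal_eq hsemi hfollow hjump
    (ρ := (1 + ‖z‖) / 2) (t := t - (2 * π - θ)) (by linarith [hz.1]) (by linarith [hz.2])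
    (by linarith)
  have hψz : ψ t z = rotFlow u (-(ρ' : ℂ)) := by
    rw [← sub_add_cancel t (2 * π - θ), hsemi _ _ (by linarith) (by linarith) z hz, ← hθz,
      psi_rotFlow_ofReal_hit hjump hz.1 hz.2 hθ₀ hθ, hψ]
  rw [hψz]
  constructor
  · rw [norm_rotFlow, norm_neg, norm_real, Real.norm_of_nonneg (by linarith)]
    exact hρ'₂
  · rw [← ofReal_neg, rotFlow_ofReal_im]
    nlinarith [Real.sin_nonneg_of_nonneg_of_le_pi hu₀ huπ.le]

include hsemi hfollow hjump in
lemma psi_pi_rotFlow_one {β : ℝ} (hβ₁ : π < β) (hβ₂ : β < 2 * π) :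
    ψ π (rotFlow β 1) = rotFlow β 1 := by
  have hhit := psi_rotFlow_ofReal_hit hjump (a := 1) le_rfl one_le_two (by linarith) hβ₂
  simp only [ofReal_one, add_self_div_two] at hhit
  rw [← sub_add_cancel π (2 * π - β), hsemi _ _ (by linarith) (by linarith) _
    (rotFlow_mem_annulus (by norm_num [annulus]) β), hhit,
    ← rotFlow_pi, ← ofReal_one, psi_rotFlow_ofReal_of_lt hfollow le_rfl one_le_two pi_pos.le
    (by linarith) (by linarith)]
  ring_nf

include hsemi hfollow hjump in
lemma norm_eq_one_and_im_nonpos_of_nonWanderingOn {x : ℂ} (hx : NonWanderingOn ψ annulus x) :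
    ‖x‖ = 1 ∧ x.im ≤ 0 := by
  obtain ⟨hxA, hrec⟩ := hx
  have hπ := pi_pos
  have hnorm : ‖x‖ ≤ 1 := by
    refine le_of_forall_pos_lt_add fun ε hε => ?_
    obtain ⟨t, ht, y, hyA, hyx, hψx⟩ := hrec (ε / 3) (by positivity) (2 * π) (by positivity)
    have hy := (norm_psi_le_and_im_psi_nonpos hsemi hfollow hjump hyA ht.le).1
    rw [dist_eq_norm] at hyx hψx
    linarith [norm_le_norm_add_norm_sub' y x, norm_le_norm_add_norm_sub (ψ t y) x]
  have him : x.im ≤ 0 := by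
    refine le_of_forall_pos_lt_add fun ε hε => ?_
    obtain ⟨t, ht, y, hyA, -, hψx⟩ := hrec ε hε (2 * π) (by positivity)
    have hy := (norm_psi_le_and_im_psi_nonpos hsemi hfollow hjump hyA ht.le).2
    rw [dist_eq_norm] at hψx
    linarith [neg_abs_le (ψ t y - x).im, Complex.abs_im_le_norm (ψ t y - x), sub_im (ψ t y) x]
  exact ⟨le_antisymm hnorm hxA.1, him⟩

include hid hsemi hfollow hjump in
lemma nonWanderingOn_of_norm_eq_one {x : ℂ} (hx : ‖x‖ = 1) (him : x.im ≤ 0) :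
    NonWanderingOn ψ annulus x := by
  refine .of_mem_closure_periodic (by simp [annulus, hx]) <|
    closure_mono ?_ (mem_closure_rotFlow_one_image_Ioo hx him)
  rintro _ ⟨β, ⟨hβ₁, hβ₂⟩, rfl⟩
  exact ⟨rotFlow_mem_annulus (by norm_num [annulus]) β, π, pi_pos,
    semiflow_nat_mul_eq_of_eq hid hsemi (rotFlow_mem_annulus (by norm_num [annulus]) β) pi_pos.le
      (psi_pi_rotFlow_one hsemi hfollow hjump hβ₁ hβ₂)⟩

end ImpulsiveRotation

theorem annulus_example_general (ψ : ℝ → ℂ → ℂ)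
    (hid : ∀ x ∈ annulus, ψ 0 x = x)
    (hsemi : ∀ s t : ℝ, 0 ≤ s → 0 ≤ t → ∀ x ∈ annulus, ψ (t + s) x = ψ t (ψ s x))
    (hfollow : ∀ x ∈ annulus, ∀ t : ℝ, 0 ≤ t →
      (∀ s : ℝ, 0 < s → s ≤ t → rotFlow s x ∉ segD) → ψ t x = rotFlow t x)
    (hjump : ∀ x ∈ annulus, ∀ t : ℝ, 0 < t → rotFlow t x ∈ segD →
      (∀ s : ℝ, 0 < s → s < t → rotFlow s x ∉ segD) → ψ t x = impMap (rotFlow t x)) :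
    (∀ z w : ℂ, dist (impMap z) (impMap w) ≤ (1 / 2) * dist z w) ∧
    (impMap '' segD ∩ segD = ∅) ∧
    {x : ℂ | NonWanderingOn ψ annulus x} =
      {z : ℂ | ‖z‖ = 1 ∧ z.im ≤ 0} := by
  refine ⟨fun z w => by rw [dist_impMap]; linarith, impMap_image_segD_inter_segD, ?_⟩
  ext x
  exact ⟨norm_eq_one_and_im_nonpos_of_nonWanderingOn hsemi hfollow hjump,
    fun ⟨hx, him⟩ => nonWanderingOn_of_norm_eq_one hid hsemi hfollow hjump hx him⟩

/-- In the annulus example: `I` is `1/2`-Lipschitz, `I(D) ∩ D = ∅`, and the non-wandering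
set of the impulsive semiflow is the lower half of the unit circle. -/
theorem annulus_example (ψ : ℝ → ℂ → ℂ)
    (hmaps : ∀ t : ℝ, 0 ≤ t → Set.MapsTo (ψ t) annulus annulus)
    (hid : ∀ x ∈ annulus, ψ 0 x = x)
    (hsemi : ∀ s t : ℝ, 0 ≤ s → 0 ≤ t → ∀ x ∈ annulus, ψ (t + s) x = ψ t (ψ s x))
    (hfollow : ∀ x ∈ annulus, ∀ t : ℝ, 0 ≤ t →
      (∀ s : ℝ, 0 < s → s ≤ t → rotFlow s x ∉ segD) → ψ t x = rotFlow t x)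
    (hjump : ∀ x ∈ annulus, ∀ t : ℝ, 0 < t → rotFlow t x ∈ segD →
      (∀ s : ℝ, 0 < s → s < t → rotFlow s x ∉ segD) → ψ t x = impMap (rotFlow t x)) :
    (∀ z w : ℂ, dist (impMap z) (impMap w) ≤ (1 / 2) * dist z w) ∧
    (impMap '' segD ∩ segD = ∅) ∧
    {x : ℂ | NonWanderingOn ψ annulus x} =
      {z : ℂ | ‖z‖ = 1 ∧ z.im ≤ 0} :=
  annulus_example_general ψ hid hsemi hfollow hjump
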